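/- Let α ∈ (1,2). There exists a constant C > 0 depending only on α such that for all pairwise distinct x, y, z ∈ B, g(x,y) g(y,z) ≤ C · g(x,z) (the 3G inequality). -/
import Mathlib


open Real Set

/-- `δ_B(x) = dist(x, ℝ∖(0,2)) = min(x, 2-x)` for `x ∈ B = (0,2)`. -/
noncomputable def deltaB (x : ℝ) : ℝ := min x (2 - x)

/-- `f(x,y) = δ_B(x)δ_B(y)/|x-y|²`. -/
noncomputable def fB (x y : ℝ) : ℝ := deltaB x * deltaB y / |x - y| ^ 2

/-- `g(x,y) = min{(δ_B(x)δ_B(y))^{(α-1)/2}, δ_B(x)^{α/2}δ_B(y)^{α/2}/|x-y|}`, comparable to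
the Green function of the symmetric α-stable process (α ∈ (1,2)) killed upon exiting `(0,2)`. -/
noncomputable def gB (α x y : ℝ) : ℝ :=
  min ((deltaB x * deltaB y) ^ ((α - 1) / 2))
    (deltaB x ^ (α / 2) * deltaB y ^ (α / 2) / |x - y|)

lemma deltaB_pos {x : ℝ} (hx : x ∈ Set.Ioo (0:ℝ) 2) : 0 < deltaB x := by
  rcases hx with ⟨h1, h2⟩
  exact lt_min h1 (by linarith)

lemma deltaB_le_one (x : ℝ) : deltaB x ≤ 1 := by
  rcases le_total x 1 with h | h
  · exact le_trans (min_le_left _ _) h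
  · exact le_trans (min_le_right _ _) (by linarith)

lemma deltaB_lip (x y : ℝ) : deltaB y ≤ deltaB x + |x - y| := by
  have h1 : y ≤ x + |x - y| := by
    have := neg_abs_le (x - y); linarith
  have h2 : 2 - y ≤ (2 - x) + |x - y| := by
    have := le_abs_self (x - y); linarith
  have : deltaB y ≤ min (x + |x - y|) ((2 - x) + |x - y|) :=
    le_min (le_trans (min_le_left _ _) h1) (le_trans (min_le_right _ _) h2)
  simpa [deltaB, min_add_add_right] using this

/-- `g(x,y) = (ab)^{α/2} / max(√(ab), |x-y|)`. -/
lemma gB_eq (α : ℝ) {x y : ℝ} (hxy : x ≠ y) (hx : 0 < deltaB x) (hy : 0 < deltaB y) :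
    gB α x y = (deltaB x * deltaB y) ^ (α / 2) /
      max (Real.sqrt (deltaB x * deltaB y)) |x - y| := by
  have hab : 0 < deltaB x * deltaB y := mul_pos hx hy
  have h1 : (deltaB x * deltaB y) ^ ((α - 1) / 2)
      = (deltaB x * deltaB y) ^ (α / 2) / Real.sqrt (deltaB x * deltaB y) := by
    rw [Real.sqrt_eq_rpow, show (α - 1) / 2 = α / 2 - 1 / 2 by ring, Real.rpow_sub hab]
  have h2 : deltaB x ^ (α / 2) * deltaB y ^ (α / 2)
      = (deltaB x * deltaB y) ^ (α / 2) := (Real.mul_rpow hx.le hy.le).symm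
  rw [gB, h1, h2]
  have hp : (0:ℝ) < (deltaB x * deltaB y) ^ (α / 2) := Real.rpow_pos_of_pos hab _
  have hs : 0 < Real.sqrt (deltaB x * deltaB y) := Real.sqrt_pos.mpr hab
  rcases le_total (Real.sqrt (deltaB x * deltaB y)) |x - y| with h | h
  · rw [max_eq_right h, min_eq_right]
    rcases eq_or_lt_of_le h with h' | h'
    · rw [h']
    · exact le_of_lt (div_lt_div_of_pos_left hp hs h')
  · rw [max_eq_left h]
    exact min_eq_left (div_le_div_of_nonneg_left hp.le (abs_pos.mpr (sub_ne_zero.mpr hxy)) h)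

/-- The 3G inequality for `g` on `B = (0,2)` when `α ∈ (1,2)`. -/
theorem green_3G (α : ℝ) (hα : α ∈ Set.Ioo (1:ℝ) 2) :
    ∃ C : ℝ, 0 < C ∧ ∀ x ∈ Set.Ioo (0:ℝ) 2, ∀ y ∈ Set.Ioo (0:ℝ) 2, ∀ z ∈ Set.Ioo (0:ℝ) 2,
      x ≠ y → y ≠ z → x ≠ z →
        gB α x y * gB α y z ≤ C * gB α x z := by
  refine ⟨5, by norm_num, fun x hx y hy z hz hxy hyz hxz => ?_⟩
  obtain ⟨hα1, hα2⟩ := hα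
  set a := deltaB x with ha_def
  set b := deltaB y with hb_def
  set c := deltaB z with hc_def
  have ha : 0 < a := deltaB_pos hx
  have hb : 0 < b := deltaB_pos hy
  have hc : 0 < c := deltaB_pos hz
  have hb1 : b ≤ 1 := deltaB_le_one y
  set r := |x - y| with hr_def
  set s := |y - z| with hs_def
  set t := |x - z| with ht_def
  have hr : 0 < r := abs_pos.mpr (sub_ne_zero.mpr hxy)
  have hs : 0 < s := abs_pos.mpr (sub_ne_zero.mpr hyz)
  have htrs : t ≤ r + s := abs_sub_le x y z
  have hba : b ≤ a + r := deltaB_lip x y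
  have hbc : b ≤ c + s := by
    have := deltaB_lip z y
    rwa [abs_sub_comm] at this
  set R1 := max (Real.sqrt (a * b)) r with hR1_def
  set R2 := max (Real.sqrt (b * c)) s with hR2_def
  set R3 := max (Real.sqrt (a * c)) t with hR3_def
  have hR1 : 0 < R1 := lt_of_lt_of_le hr (le_max_right _ _)
  have hR2 : 0 < R2 := lt_of_lt_of_le hs (le_max_right _ _)
  have hR3 : 0 < R3 := lt_of_lt_of_le (Real.sqrt_pos.mpr (mul_pos ha hc)) (le_max_left _ _)
  -- b ≤ 2 R1 and b ≤ 2 R2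
  have key1 : ∀ u v : ℝ, 0 < u → b ≤ u + v → b ≤ 2 * max (Real.sqrt (u * b)) v := by
    intro u v hu huv
    rcases le_total (b / 2) u with h | h
    · have hsq : b / 2 ≤ Real.sqrt (u * b) := by
        rw [Real.le_sqrt (by positivity) (by positivity)]
        nlinarith
      calc b = 2 * (b / 2) := by ring
        _ ≤ 2 * Real.sqrt (u * b) := by linarith
        _ ≤ 2 * max (Real.sqrt (u * b)) v := by
            have := le_max_left (Real.sqrt (u * b)) v; linarith
    · have : b ≤ 2 * v := by linarith
      calc b ≤ 2 * v := this
        _ ≤ 2 * max (Real.sqrt (u * b)) v := by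
            have := le_max_right (Real.sqrt (u * b)) v; linarith
  have hb2R1 : b ≤ 2 * R1 := key1 a r ha hba
  have hb2R2 : b ≤ 2 * R2 := by
    have := key1 c s hc hbc
    rwa [show c * b = b * c by ring] at this
  -- b √(ac) = √(ab) √(bc)
  have hprod : Real.sqrt (a * b) * Real.sqrt (b * c) = b * Real.sqrt (a * c) := by
    rw [← Real.sqrt_mul (by positivity), show a * b * (b * c) = b ^ 2 * (a * c) by ring,
      Real.sqrt_mul (by positivity), Real.sqrt_sq hb.le]
  -- key inequality : b * R3 ≤ 5 R1 R2
  have hkey : b * R3 ≤ 5 * (R1 * R2) := by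
    have h3 : R3 ≤ Real.sqrt (a * c) + t :=
      max_le (le_add_of_nonneg_right (by positivity)) (le_add_of_nonneg_left (Real.sqrt_nonneg _))
    have h4 : b * Real.sqrt (a * c) ≤ R1 * R2 := by
      rw [← hprod]
      exact mul_le_mul (le_max_left _ _) (le_max_left _ _) (Real.sqrt_nonneg _) hR1.le
    have hrR1 : r ≤ R1 := le_max_right _ _
    have hsR2 : s ≤ R2 := le_max_right _ _
    nlinarith [mul_le_mul_of_nonneg_left h3 hb.le, mul_le_mul hb2R2 hrR1 hr.le (by linarith),
      mul_le_mul hb2R1 hsR2 hs.le (by linarith)]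
  -- rewrite g's
  rw [gB_eq α hxy ha hb, gB_eq α hyz hb hc, gB_eq α hxz ha hc,
    ← ha_def, ← hb_def, ← hc_def, ← hr_def, ← hs_def, ← ht_def, ← hR1_def, ← hR2_def, ← hR3_def,
    div_mul_div_comm, mul_div_assoc', div_le_div_iff₀ (mul_pos hR1 hR2) hR3]
  -- (ab)^{α/2} (bc)^{α/2} = b^α (ac)^{α/2}
  have hpow : (a * b) ^ (α / 2) * (b * c) ^ (α / 2) = b ^ α * (a * c) ^ (α / 2) := by
    rw [← Real.mul_rpow (by positivity) (by positivity),
      show a * b * (b * c) = b ^ 2 * (a * c) by ring,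
      Real.mul_rpow (by positivity) (by positivity), ← Real.rpow_natCast b 2,
      ← Real.rpow_mul hb.le, show ((2:ℕ):ℝ) * (α / 2) = α by push_cast; ring]
  rw [hpow]
  have hbα : b ^ α ≤ b := by
    have := Real.rpow_le_rpow_of_exponent_ge hb hb1 hα1.le
    rwa [Real.rpow_one] at this
  have hbα0 : 0 < b ^ α := Real.rpow_pos_of_pos hb _
  have hac : (0:ℝ) < (a * c) ^ (α / 2) := Real.rpow_pos_of_pos (mul_pos ha hc) _
  calc b ^ α * (a * c) ^ (α / 2) * R3 ≤ b * (a * c) ^ (α / 2) * R3 :=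
      mul_le_mul_of_nonneg_right (mul_le_mul_of_nonneg_right hbα hac.le) hR3.le
    _ = (a * c) ^ (α / 2) * (b * R3) := by ring
    _ ≤ (a * c) ^ (α / 2) * (5 * (R1 * R2)) := mul_le_mul_of_nonneg_left hkey hac.le
    _ = 5 * (a * c) ^ (α / 2) * (R1 * R2) := by ring
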